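/- The map γ is a permutation of D_n: for every w ∈ D_n, γ(w) ∈ D_n, and the map w ↦ γ(w) is a bijection from D_n onto D_n. -/

import Mathlib

/-!
Write `w ∈ D_n` as `u·a·v·b` with `u·a` its principal prefix (the principal prefix is empty
only for `w = b`). That `w` has this shape is a condition on the heights of the prefixes of `u`
and `v` alone: the prefixes of `u` stay in `[0, δ u]` and those of `v` in `[-(δ u + 1), 0]`.
Complementing, the same condition says that `γ(w) = v̄·b·ū·b` lies in `D_n` and that `v̄` is its
*last* prefix of maximal height. A word has exactly one such prefix, so `γ(w)` determines `v̄`,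
hence `ū` and `w`; and starting from the last maximal prefix of any `w' ∈ D_n` the same
correspondence produces a preimage.
-/

/-- The two-letter alphabet {a, b}. -/
inductive Letter : Type
  | a : Letter
  | b : Letter
deriving DecidableEq, BEq, Repr

/-- Words over the alphabet {a, b}. -/
abbrev Word := List Letter

/-- δ(w) = |w|_a − |w|_b. -/
def delta (w : Word) : ℤ := (w.count Letter.a : ℤ) - (w.count Letter.b : ℤ)

/-- A Dyck word: δ(w) = 0 and δ(p) ≥ 0 for every prefix p of w. -/
def IsDyck (w : Word) : Prop := delta w = 0 ∧ ∀ p : Word, p <+: w → 0 ≤ delta p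

/-- Membership in D_n: w = d·b with d a Dyck word of length 2n. -/
def InD (n : ℕ) (w : Word) : Prop :=
  ∃ d : Word, IsDyck d ∧ d.length = 2 * n ∧ w = d ++ [Letter.b]

/-- Exchanging the letters a and b. -/
def Letter.flip : Letter → Letter
  | .a => .b
  | .b => .a

/-- The complement w̄ of a word w. -/
def comp (w : Word) : Word := w.map Letter.flip

/-- Sym(w): the complement of the mirror (reversal) of w. -/
def sym (w : Word) : Word := comp w.reverse

/-- A palindrome: a word equal to its mirror. -/
def Palindrome (w : Word) : Prop := w.reverse = w

/-- w' is a conjugate of w: w = u·v and w' = v·u. -/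
def Conj (w w' : Word) : Prop := ∃ u v : Word, w = u ++ v ∧ w' = v ++ u

/-- u is the principal prefix of w: the shortest prefix of w with δ(u) maximal. -/
def IsPrincipalPrefix (u w : Word) : Prop :=
  u <+: w ∧ (∀ p : Word, p <+: w → delta p ≤ delta u) ∧
    (∀ p : Word, p <+: w → delta p = delta u → u.length ≤ p.length)

/-- The graph of the map γ: writing w = u·v·b with u the principal prefix of w,
    γ(w) = v̄·b·ū. -/
def GammaRel (w w' : Word) : Prop :=
  ∃ u v : Word, IsPrincipalPrefix u w ∧ w = u ++ v ++ [Letter.b] ∧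
    w' = comp v ++ [Letter.b] ++ comp u

/-- F_n: the fixed points of γ in D_n. -/
def InF (n : ℕ) (w : Word) : Prop := InD n w ∧ GammaRel w w

/-- F_γ = ⋃_{n ≥ 1} F_n. -/
def InFgamma (w : Word) : Prop := ∃ n : ℕ, 1 ≤ n ∧ InF n w

/-- x^y: concatenation of the word x with itself y times. -/
def wpow (x : Word) : ℕ → Word
  | 0 => []
  | k + 1 => x ++ wpow x k

namespace List

variable {α β : Type*}

theorem prefix_append_iff {p x y : List α} :
    p <+: x ++ y ↔ p <+: x ∨ ∃ r, r <+: y ∧ p = x ++ r := by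
  refine ⟨fun h => ?_, ?_⟩
  · rcases le_total p.length x.length with hle | hle
    · exact .inl (prefix_of_prefix_length_le h (prefix_append x y) hle)
    · obtain ⟨r, rfl⟩ := prefix_of_prefix_length_le (prefix_append x y) h hle
      exact .inr ⟨r, (prefix_append_right_inj x).mp h, rfl⟩
  · rintro (h | ⟨r, hr, rfl⟩)
    · exact h.trans (prefix_append x y)
    · exact (prefix_append_right_inj x).mpr hr

theorem forall_prefix_append {P : List α → Prop} {x y : List α} :
    (∀ p, p <+: x ++ y → P p) ↔ (∀ p, p <+: x → P p) ∧ ∀ r, r <+: y → P (x ++ r) := by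
  simp only [prefix_append_iff]
  grind

theorem forall_prefix_map {f : α → β} {P : List β → Prop} {x : List α} :
    (∀ p, p <+: x.map f → P p) ↔ ∀ q, q <+: x → P (q.map f) := by
  simp only [prefix_map_iff]
  grind

theorem forall_prefix_singleton {P : List α → Prop} {c : α} :
    (∀ p, p <+: [c] → P p) ↔ P [] ∧ P [c] := by
  simp only [prefix_cons_iff, prefix_nil]
  grind

end List

@[simp] lemma delta_nil : delta [] = 0 := rfl

@[simp] lemma delta_singleton_a : delta [Letter.a] = 1 := rfl

@[simp] lemma delta_singleton_b : delta [Letter.b] = -1 := rfl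

@[simp] lemma delta_append (u v : Word) : delta (u ++ v) = delta u + delta v := by
  simp only [delta, List.count_append]
  push_cast
  ring

@[simp] lemma Letter.flip_flip (c : Letter) : c.flip.flip = c := by cases c <;> rfl

@[simp] lemma comp_comp (w : Word) : comp (comp w) = w := by
  simp [comp, Function.comp_def]

@[simp] lemma comp_append (u v : Word) : comp (u ++ v) = comp u ++ comp v := List.map_append

@[simp] lemma comp_nil : comp [] = [] := rfl

@[simp] lemma comp_singleton_a : comp [Letter.a] = [Letter.b] := rfl

@[simp] lemma comp_singleton_b : comp [Letter.b] = [Letter.a] := rfl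

@[simp] lemma length_comp (w : Word) : (comp w).length = w.length := List.length_map _

@[simp] lemma delta_comp (w : Word) : delta (comp w) = -delta w := by
  induction w with
  | nil => rfl
  | cons c t ih =>
    change delta ([c.flip] ++ comp t) = -delta ([c] ++ t)
    rw [delta_append, delta_append, ih]
    cases c <;> simp only [Letter.flip, delta_singleton_a, delta_singleton_b] <;> ring

lemma forall_prefix_comp {P : Word → Prop} {w : Word} :
    (∀ p, p <+: comp w → P p) ↔ ∀ q, q <+: w → P (comp q) :=
  List.forall_prefix_map

def IsLastMaxPrefix (x w : Word) : Prop :=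
  x <+: w ∧ (∀ p : Word, p <+: w → delta p ≤ delta x) ∧
    (∀ p : Word, p <+: w → delta p = delta x → p.length ≤ x.length)

lemma IsPrincipalPrefix.unique {u₁ u₂ w : Word} (h₁ : IsPrincipalPrefix u₁ w)
    (h₂ : IsPrincipalPrefix u₂ w) : u₁ = u₂ := by
  have hδ : delta u₁ = delta u₂ := le_antisymm (h₂.2.1 u₁ h₁.1) (h₁.2.1 u₂ h₂.1)
  have hl : u₁.length = u₂.length := le_antisymm (h₁.2.2 u₂ h₂.1 hδ.symm) (h₂.2.2 u₁ h₁.1 hδ)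
  exact (List.prefix_of_prefix_length_le h₁.1 h₂.1 hl.le).eq_of_length hl

lemma IsLastMaxPrefix.unique {x₁ x₂ w : Word} (h₁ : IsLastMaxPrefix x₁ w)
    (h₂ : IsLastMaxPrefix x₂ w) : x₁ = x₂ := by
  have hδ : delta x₁ = delta x₂ := le_antisymm (h₂.2.1 x₁ h₁.1) (h₁.2.1 x₂ h₂.1)
  have hl : x₁.length = x₂.length := le_antisymm (h₂.2.2 x₁ h₁.1 hδ) (h₁.2.2 x₂ h₂.1 hδ.symm)
  exact (List.prefix_of_prefix_length_le h₁.1 h₂.1 hl.le).eq_of_length hl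

lemma exists_max_delta_prefix (w : Word) :
    ∃ m, (∃ p, p <+: w ∧ delta p = m) ∧ ∀ p, p <+: w → delta p ≤ m := by
  obtain ⟨p, hp, hmax⟩ := w.inits.toFinset.exists_max_image delta ⟨[], by simp⟩
  simp only [List.mem_toFinset, List.mem_inits] at hp hmax
  exact ⟨delta p, ⟨p, hp, rfl⟩, hmax⟩

lemma exists_isPrincipalPrefix (w : Word) : ∃ u, IsPrincipalPrefix u w := by
  classical
  obtain ⟨m, ⟨p, hp, hpm⟩, hmax⟩ := exists_max_delta_prefix w
  obtain ⟨u, hu, hmin⟩ := (w.inits.toFinset.filter (delta · = m)).exists_min_image List.length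
    ⟨p, by simp [hp, hpm]⟩
  simp only [Finset.mem_filter, List.mem_toFinset, List.mem_inits] at hu hmin
  exact ⟨u, hu.1, hu.2 ▸ hmax, fun q hq hqu => hmin q ⟨hq, hqu.trans hu.2⟩⟩

lemma exists_isLastMaxPrefix (w : Word) : ∃ x, IsLastMaxPrefix x w := by
  classical
  obtain ⟨m, ⟨p, hp, hpm⟩, hmax⟩ := exists_max_delta_prefix w
  obtain ⟨x, hx, hlen⟩ := (w.inits.toFinset.filter (delta · = m)).exists_max_image List.length
    ⟨p, by simp [hp, hpm]⟩
  simp only [Finset.mem_filter, List.mem_toFinset, List.mem_inits] at hx hlen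
  exact ⟨x, hx.1, hx.2 ▸ hmax, fun q hq hqx => hlen q ⟨hq, hqx.trans hx.2⟩⟩

/-- Heights of the prefixes of `u` and `v` when `u ++ [a] ++ v ++ [b]` lies in some D_n with
principal prefix `u ++ [a]` (`isPrincipalSplit_iff`). -/
def IsPrincipalSplit (u v : Word) : Prop :=
  (∀ r, r <+: u → 0 ≤ delta r ∧ delta r ≤ delta u) ∧
    (∀ q, q <+: v → -(delta u + 1) ≤ delta q ∧ delta q ≤ 0) ∧ delta v = -(delta u + 1)

lemma isPrincipalSplit_iff (u v : Word) :
    IsPrincipalSplit u v ↔ IsDyck (u ++ [Letter.a] ++ v) ∧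
      IsPrincipalPrefix (u ++ [Letter.a]) (u ++ [Letter.a] ++ v ++ [Letter.b]) := by
  simp only [IsPrincipalSplit, IsDyck, IsPrincipalPrefix, List.forall_prefix_append,
    List.forall_prefix_singleton, delta_append, delta_nil, delta_singleton_a, delta_singleton_b,
    List.length_append, List.length_singleton, List.length_nil]
  constructor
  · intro h
    have hu : 0 ≤ delta u := (h.1 u List.prefix_rfl).1
    grind [List.prefix_append]
  · -- minimality of the principal prefix keeps the prefixes of `u` at height `≤ δ u`
    grind [List.IsPrefix.length_le]

lemma isPrincipalSplit_comp_iff (x y : Word) :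
    IsPrincipalSplit (comp y) (comp x) ↔ IsDyck (x ++ [Letter.b] ++ y) ∧
      IsLastMaxPrefix x (x ++ [Letter.b] ++ y ++ [Letter.b]) := by
  simp only [IsPrincipalSplit, IsDyck, IsLastMaxPrefix, forall_prefix_comp, delta_comp,
    List.forall_prefix_append, List.forall_prefix_singleton, delta_append, delta_nil,
    delta_singleton_b, List.length_append, List.length_singleton, List.length_nil]
  constructor
  · intro h
    have hy : delta y ≤ 0 := by simpa using (h.1 y List.prefix_rfl).1
    grind [List.prefix_append, List.IsPrefix.length_le]
  · -- maximality of the length of `x` keeps the prefixes of `y` at height `≤ 0`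
    grind

lemma comp_injective : Function.Injective comp :=
  Function.LeftInverse.injective comp_comp

lemma eq_nil_of_forall_prefix_delta_eq_zero {w : Word} (h : ∀ p, p <+: w → delta p = 0) :
    w = [] := by
  rcases w with _ | ⟨c, w⟩
  · rfl
  · have := h [c] (by simp)
    cases c <;> simp at this

lemma isPrincipalPrefix_nil_singleton_b : IsPrincipalPrefix [] [Letter.b] := by
  simp [IsPrincipalPrefix, List.forall_prefix_singleton]

lemma isLastMaxPrefix_nil_singleton_b : IsLastMaxPrefix [] [Letter.b] := by
  simp [IsLastMaxPrefix, List.forall_prefix_singleton]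

lemma IsDyck.prefix_of_delta_nonneg {d p : Word} (hd : IsDyck d) (hp : p <+: d ++ [Letter.b])
    (hδ : 0 ≤ delta p) : p <+: d := by
  rcases List.prefix_concat_iff.mp hp with rfl | h
  · simp [hd.1] at hδ
  · exact h

lemma IsPrincipalPrefix.exists_split {n : ℕ} {u w : Word} (hw : InD n w)
    (hu : IsPrincipalPrefix u w) : ∃ v, w = u ++ v ++ [Letter.b] := by
  obtain ⟨d, hd, -, rfl⟩ := hw
  obtain ⟨v, rfl⟩ := hd.prefix_of_delta_nonneg hu.1 (by simpa using hu.2.1 [] List.nil_prefix)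
  exact ⟨v, rfl⟩

lemma IsLastMaxPrefix.exists_split {n : ℕ} {x w : Word} (hw : InD n w)
    (hx : IsLastMaxPrefix x w) : ∃ y, w = x ++ [Letter.b] ++ y := by
  obtain ⟨d, hd, -, rfl⟩ := hw
  obtain ⟨t, rfl⟩ := hd.prefix_of_delta_nonneg hx.1 (by simpa using hx.2.1 [] List.nil_prefix)
  rcases t with _ | ⟨c, t⟩
  · exact ⟨[], by simp⟩
  · cases c
    · have := hx.2.1 (x ++ [Letter.a]) ⟨t ++ [Letter.b], by simp⟩
      simp at this
    · exact ⟨t ++ [Letter.b], by simp⟩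

lemma GammaRel.right_unique {w w₁ w₂ : Word} (h₁ : GammaRel w w₁) (h₂ : GammaRel w w₂) :
    w₁ = w₂ := by
  obtain ⟨u₁, v₁, hu₁, rfl, rfl⟩ := h₁
  obtain ⟨u₂, v₂, hu₂, hsplit, rfl⟩ := h₂
  obtain rfl := hu₁.unique hu₂
  obtain rfl : v₁ = v₂ := by simpa using hsplit
  rfl

lemma exists_gammaRel {n : ℕ} {w : Word} (hw : InD n w) : ∃ w', GammaRel w w' := by
  obtain ⟨u, hu⟩ := exists_isPrincipalPrefix w
  obtain ⟨v, hv⟩ := hu.exists_split hw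
  exact ⟨_, u, v, hu, hv, rfl⟩

lemma inD_gamma_of_isPrincipalPrefix {n : ℕ} {u v : Word} (hw : InD n (u ++ v ++ [Letter.b]))
    (hu : IsPrincipalPrefix u (u ++ v ++ [Letter.b])) :
    InD n (comp v ++ [Letter.b] ++ comp u) ∧
      IsLastMaxPrefix (comp v) (comp v ++ [Letter.b] ++ comp u) := by
  obtain ⟨d, hd, hlen, hdw⟩ := hw
  obtain rfl : d = u ++ v := (List.append_cancel_right hdw).symm
  rcases u.eq_nil_or_concat' with rfl | ⟨u, c, rfl⟩
  · -- an empty principal prefix forces every prefix of `v` to have height `0`, so `w = b`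
    obtain rfl : v = [] := eq_nil_of_forall_prefix_delta_eq_zero fun q hq =>
      le_antisymm (by simpa using hu.2.1 q (hq.trans (List.prefix_append _ _))) (hd.2 q (by simpa))
    exact ⟨⟨[], by simpa using hd, by simpa using hlen, rfl⟩, isLastMaxPrefix_nil_singleton_b⟩
  · -- if the principal prefix ended with `b`, dropping that letter would raise its height
    obtain rfl : c = Letter.a := by
      cases c
      · rfl
      · have := hu.2.1 u (by simp)
        simp at this
    have hsplit := (isPrincipalSplit_iff u v).mpr ⟨hd, hu⟩
    rw [← comp_comp u, ← comp_comp v, isPrincipalSplit_comp_iff] at hsplit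
    obtain ⟨hd', hx⟩ := hsplit
    simp only [comp_append, comp_singleton_a, ← List.append_assoc]
    refine ⟨⟨_, hd', ?_, rfl⟩, hx⟩
    simp only [List.length_append, length_comp, List.length_singleton] at hlen ⊢
    omega

lemma inD_gammaInv_of_isLastMaxPrefix {n : ℕ} {x y : Word} (hw : InD n (x ++ [Letter.b] ++ y))
    (hx : IsLastMaxPrefix x (x ++ [Letter.b] ++ y)) :
    InD n (comp y ++ comp x ++ [Letter.b]) ∧
      IsPrincipalPrefix (comp y) (comp y ++ comp x ++ [Letter.b]) := by
  obtain ⟨d, hd, hlen, hdw⟩ := hw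
  rcases y.eq_nil_or_concat' with rfl | ⟨y, c, rfl⟩
  · rw [List.append_nil] at hx hdw
    obtain rfl : d = x := (List.append_cancel_right hdw).symm
    obtain rfl : d = [] := eq_nil_of_forall_prefix_delta_eq_zero fun p hp =>
      le_antisymm (by simpa [hd.1] using hx.2.1 p (hp.trans (List.prefix_append _ _))) (hd.2 p hp)
    exact ⟨⟨[], hd, hlen, rfl⟩, isPrincipalPrefix_nil_singleton_b⟩
  · rw [← List.append_assoc] at hx hdw
    obtain ⟨rfl, hc⟩ := List.append_inj' hdw rfl
    obtain rfl : c = Letter.b := List.singleton_inj.mp hc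
    have hsplit := (isPrincipalSplit_comp_iff x y).mpr ⟨hd, hx⟩
    rw [isPrincipalSplit_iff] at hsplit
    obtain ⟨hd', hu⟩ := hsplit
    simp only [comp_append, comp_singleton_b]
    refine ⟨⟨_, hd', ?_, rfl⟩, hu⟩
    simp only [List.length_append, length_comp, List.length_singleton] at hlen ⊢
    omega

/-- γ is a permutation of D_n: every w ∈ D_n has a unique γ-image, this image
    lies in D_n, and w ↦ γ(w) is injective and surjective on D_n. -/
theorem gamma_permutation (n : ℕ) :
    (∀ w : Word, InD n w → ∃! w' : Word, GammaRel w w') ∧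
    (∀ w w' : Word, InD n w → GammaRel w w' → InD n w') ∧
    (∀ w₁ w₂ w' : Word, InD n w₁ → InD n w₂ →
      GammaRel w₁ w' → GammaRel w₂ w' → w₁ = w₂) ∧
    (∀ w' : Word, InD n w' → ∃ w : Word, InD n w ∧ GammaRel w w') := by
  refine ⟨fun w hw => ?_, ?_, ?_, fun w' hw' => ?_⟩
  · obtain ⟨w', h⟩ := exists_gammaRel hw
    exact ⟨w', h, fun _ h' => h'.right_unique h⟩
  · rintro w w' hw ⟨u, v, hu, rfl, rfl⟩
    exact (inD_gamma_of_isPrincipalPrefix hw hu).1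
  · rintro w₁ w₂ w' hw₁ hw₂ ⟨u₁, v₁, hu₁, rfl, rfl⟩ ⟨u₂, v₂, hu₂, rfl, hw'⟩
    have hv : comp v₁ = comp v₂ := (inD_gamma_of_isPrincipalPrefix hw₁ hu₁).2.unique
      (hw' ▸ (inD_gamma_of_isPrincipalPrefix hw₂ hu₂).2)
    rw [hv] at hw'
    rw [comp_injective hv, comp_injective (List.append_cancel_left hw')]
  · obtain ⟨x, hx⟩ := exists_isLastMaxPrefix w'
    obtain ⟨y, rfl⟩ := hx.exists_split hw'
    obtain ⟨hw, hu⟩ := inD_gammaInv_of_isLastMaxPrefix hw' hx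
    exact ⟨_, hw, comp y, comp x, hu, rfl, by simp⟩
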